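/- arXiv:0708.3177 — 5 statements merged into one kernel-verified Lean document; each statement's English description precedes it below -/
import Mathlib

section
/- Let (A(t))_{t∈ℕ} be a sequence of n×n nonnegative real matrices, each with strictly positive diagonal entries. For s ≤ t define the backward accumulation A(t,s) = A(t-1)·A(t-2)⋯A(s) (with A(s,s) the identity matrix). Then there exists a strictly increasing sequence of natural numbers 0 < t_0 < t_1 < t_2 < ⋯ such that for all i ∈ ℕ the matrices A(t_{i+1}, t_i) and A(t_1, t_0) have the same type, i.e., for all indices k, l: A(t_{i+1},t_i)_{kl} > 0 if and only if A(t_1,t_0)_{kl} > 0. -/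
/-!
The type of `A(t, s)` can only grow when the interval `[s, t)` is enlarged on either side: every
factor has a positive diagonal, so a positive entry of a partial product survives further
multiplication. Hence for fixed `s` the type stabilizes as `t → ∞`, and the limiting type
decreases in `s`, so it stabilizes as well, say from `s₀` on. Any time sequence beyond `s₀`
whose gaps exceed the stabilization times then has constant block types.
-/

/-- Backward accumulation `A(t,s) = A(t-1) ⬝ A(t-2) ⋯ A(s)` (identity for `s = t`). -/
def backAcc {n : ℕ} (A : ℕ → Matrix (Fin n) (Fin n) ℝ) (s t : ℕ) :
    Matrix (Fin n) (Fin n) ℝ :=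
  (((List.range' s (t - s)).map A).reverse).prod

theorem exists_strictMono_eq_of_monotone_of_antitone {α : Type*} [PartialOrder α]
    [WellFoundedGT α] [WellFoundedLT α] {f : ℕ → ℕ → α} (hmono : ∀ s, Monotone (f s))
    (hanti : ∀ t, Antitone (f · t)) :
    ∃ τ : ℕ → ℕ, StrictMono τ ∧ 0 < τ 0 ∧ ∀ i, f (τ i) (τ (i + 1)) = f (τ 0) (τ 1) := by
  choose T hT using fun s => WellFoundedGT.monotone_chain_condition ⟨f s, hmono s⟩
  set lim : ℕ → α := fun s => f s (T s)
  have hlim : Antitone lim := fun s s' h => calc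
    lim s' = f s' (max (T s) (T s')) := hT s' _ (le_max_right _ _)
    _ ≤ f s (max (T s) (T s')) := hanti _ h
    _ = lim s := (hT s _ (le_max_left _ _)).symm
  obtain ⟨s₀, hs₀⟩ := WellFoundedLT.antitone_chain_condition hlim
  set g : ℕ → ℕ := fun s => max s (T s) + 1
  set τ : ℕ → ℕ := fun i => g^[i] (s₀ + 1)
  have hτ_succ (i : ℕ) : τ (i + 1) = g (τ i) := Function.iterate_succ_apply' g i _
  have hτ : StrictMono τ := strictMono_nat_of_lt_succ fun i => by
    rw [hτ_succ]; exact Nat.lt_succ_of_le (le_max_left _ _)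
  have hτ_block (i : ℕ) : f (τ i) (τ (i + 1)) = lim s₀ := by
    have hs₀_le : s₀ ≤ τ i := (Nat.le_succ s₀).trans (hτ.monotone (Nat.zero_le i))
    rw [hs₀ _ hs₀_le, hτ_succ]
    exact (hT _ _ ((le_max_right _ _).trans (Nat.le_succ _))).symm
  exact ⟨τ, hτ, Nat.succ_pos s₀, fun i => (hτ_block i).trans (hτ_block 0).symm⟩

namespace Matrix

variable {ι R : Type*} [Fintype ι] [Semiring R] [PartialOrder R] [IsStrictOrderedRing R]

/-- Nonnegative matrices `A`, `B` have the same type iff `A.posSupport = B.posSupport`. -/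
def posSupport (B : Matrix ι ι R) : Set (ι × ι) := {p | 0 < B p.1 p.2}

theorem mul_apply_ge_of_nonneg {B C : Matrix ι ι R} (hB : ∀ i j, 0 ≤ B i j)
    (hC : ∀ i j, 0 ≤ C i j) (k m l : ι) : B k m * C m l ≤ (B * C) k l :=
  Finset.single_le_sum (fun m _ => mul_nonneg (hB k m) (hC m l)) (Finset.mem_univ m)

variable [DecidableEq ι]

variable (ι R) in
def nonnegPosDiag : Submonoid (Matrix ι ι R) where
  carrier := {B | (∀ i j, 0 ≤ B i j) ∧ ∀ i, 0 < B i i}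
  one_mem' := ⟨fun i j => by by_cases h : i = j <;> simp [one_apply, h], fun i => by simp⟩
  mul_mem' {B C} hB hC :=
    ⟨fun i j => Finset.sum_nonneg fun m _ => mul_nonneg (hB.1 i m) (hC.1 m j),
      fun i => (mul_pos (hB.2 i) (hC.2 i)).trans_le (mul_apply_ge_of_nonneg hB.1 hC.1 i i i)⟩

theorem posSupport_subset_mul_left {B C : Matrix ι ι R} (hB : B ∈ nonnegPosDiag ι R)
    (hC : ∀ i j, 0 ≤ C i j) : posSupport C ⊆ posSupport (B * C) := fun p hp =>
  (mul_pos (hB.2 p.1) hp).trans_le (mul_apply_ge_of_nonneg hB.1 hC _ _ _)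

theorem posSupport_subset_mul_right {B C : Matrix ι ι R} (hB : ∀ i j, 0 ≤ B i j)
    (hC : C ∈ nonnegPosDiag ι R) : posSupport B ⊆ posSupport (B * C) := fun p hp =>
  (mul_pos hp (hC.2 p.2)).trans_le (mul_apply_ge_of_nonneg hB hC.1 _ _ _)

theorem posSupport_one_subset {B : Matrix ι ι R} (hB : B ∈ nonnegPosDiag ι R) :
    posSupport (1 : Matrix ι ι R) ⊆ posSupport B := by
  simpa using posSupport_subset_mul_right (nonnegPosDiag ι R).one_mem.1 hB

end Matrix

namespace backAcc

open Matrix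

variable {n : ℕ} {A : ℕ → Matrix (Fin n) (Fin n) ℝ}

theorem mem_nonnegPosDiag (hA : ∀ t, A t ∈ nonnegPosDiag (Fin n) ℝ) (s t : ℕ) :
    backAcc A s t ∈ nonnegPosDiag (Fin n) ℝ :=
  Submonoid.list_prod_mem _ fun B hB => by
    obtain ⟨u, -, rfl⟩ := List.mem_map.1 (List.mem_reverse.1 hB)
    exact hA u

theorem eq_one_of_le {s t : ℕ} (h : t ≤ s) : backAcc A s t = 1 := by
  simp [backAcc, Nat.sub_eq_zero_of_le h]

theorem mul_backAcc {s t u : ℕ} (hst : s ≤ t) (htu : t ≤ u) :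
    backAcc A t u * backAcc A s t = backAcc A s u := by
  have hrange : List.range' s (t - s) ++ List.range' t (u - t) = List.range' s (u - s) := by
    simpa [show s + (t - s) = t by omega, show t - s + (u - t) = u - s by omega] using
      List.range'_append (s := s) (m := t - s) (n := u - t) (step := 1)
  simp only [backAcc, ← hrange, List.map_append, List.reverse_append, List.prod_append]

theorem monotone_posSupport (hA : ∀ t, A t ∈ nonnegPosDiag (Fin n) ℝ) (s : ℕ) :
    Monotone fun t => posSupport (backAcc A s t) := by
  intro t u htu
  dsimp only
  rcases le_or_gt s t with hst | hts
  · rw [← mul_backAcc hst htu]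
    exact posSupport_subset_mul_left (mem_nonnegPosDiag hA t u) (mem_nonnegPosDiag hA s t).1
  · simpa only [eq_one_of_le hts.le] using posSupport_one_subset (mem_nonnegPosDiag hA s u)

theorem antitone_posSupport (hA : ∀ t, A t ∈ nonnegPosDiag (Fin n) ℝ) (u : ℕ) :
    Antitone fun s => posSupport (backAcc A s u) := by
  intro s t hst
  dsimp only
  rcases le_or_gt t u with htu | hut
  · rw [← mul_backAcc hst htu]
    exact posSupport_subset_mul_right (mem_nonnegPosDiag hA t u).1 (mem_nonnegPosDiag hA s t)
  · simpa only [eq_one_of_le hut.le] using posSupport_one_subset (mem_nonnegPosDiag hA s u)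

end backAcc

theorem stmt0_general {n : ℕ} (A : ℕ → Matrix (Fin n) (Fin n) ℝ)
    (hnonneg : ∀ t i j, 0 ≤ A t i j) (hdiag : ∀ t i, 0 < A t i i) :
    ∃ t : ℕ → ℕ, StrictMono t ∧ 0 < t 0 ∧
      ∀ i : ℕ, ∀ k l : Fin n,
        0 < backAcc A (t i) (t (i + 1)) k l ↔ 0 < backAcc A (t 0) (t 1) k l := by
  have hA : ∀ t, A t ∈ Matrix.nonnegPosDiag (Fin n) ℝ := fun t => ⟨hnonneg t, hdiag t⟩
  obtain ⟨τ, hτ, hτ₀, hblock⟩ := exists_strictMono_eq_of_monotone_of_antitone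
    (backAcc.monotone_posSupport hA) (backAcc.antitone_posSupport hA)
  exact ⟨τ, hτ, hτ₀, fun i k l => Set.ext_iff.1 (hblock i) (k, l)⟩

/-- For a sequence of nonnegative matrices with positive diagonals, there is a strictly
increasing sequence `0 < t 0 < t 1 < ⋯` such that all backward accumulations
`A(t (i+1), t i)` have the same type (zero pattern) as `A(t 1, t 0)`. -/
theorem stmt0 {n : ℕ} (hn : 1 ≤ n) (A : ℕ → Matrix (Fin n) (Fin n) ℝ)
    (hnonneg : ∀ t i j, 0 ≤ A t i j) (hdiag : ∀ t i, 0 < A t i i) :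
    ∃ t : ℕ → ℕ, StrictMono t ∧ 0 < t 0 ∧
      ∀ i : ℕ, ∀ k l : Fin n,
        0 < backAcc A (t i) (t (i + 1)) k l ↔ 0 < backAcc A (t 0) (t 1) k l :=
  stmt0_general A hnonneg hdiag
end

section
/- Let (A(t))_{t∈ℕ} be a sequence of n×n nonnegative real matrices, each with strictly positive diagonal entries. For s ≤ t define the forward accumulation A(s,t) = A(s)·A(s+1)⋯A(t-1) (with A(s,s) the identity matrix). Then there exists a strictly increasing sequence of natural numbers 0 < s_0 < s_1 < s_2 < ⋯ such that for all i ∈ ℕ the matrices A(s_i, s_{i+1}) and A(s_0, s_1) have the same type, i.e., for all indices k, l: A(s_i,s_{i+1})_{kl} > 0 if and only if A(s_0,s_1)_{kl} > 0. -/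
/-!
For fixed `s`, right multiplication by a nonnegative matrix with positive diagonal can only
create positive entries, so the type of `A(s,t)` grows with `t` and, having finitely many
possible values, stabilizes at some time `T s` to a limit type. By pigeonhole one limit type `P`
is attained for infinitely many `s`; choosing such times `s_0 < s_1 < ⋯` with
`T s_i ≤ s_{i+1}` makes every `A(s_i, s_{i+1})` of type `P`.
-/

/-- Forward accumulation `A(s,t) = A(s) ⬝ A(s+1) ⋯ A(t-1)` (identity for `s = t`). -/
def fwdAcc {n : ℕ} (A : ℕ → Matrix (Fin n) (Fin n) ℝ) (s t : ℕ) :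
    Matrix (Fin n) (Fin n) ℝ :=
  ((List.range' s (t - s)).map A).prod

namespace Matrix

variable {ι R : Type*} [Fintype ι] [Semiring R] [PartialOrder R] [IsStrictOrderedRing R]

/-- The type of a matrix, as the set of positions of its positive entries. -/
def posEntries (M : Matrix ι ι R) : Set (ι × ι) := {p | 0 < M p.1 p.2}

lemma mul_apply_nonneg {M N : Matrix ι ι R} (hM : ∀ i j, 0 ≤ M i j)
    (hN : ∀ i j, 0 ≤ N i j) (i j : ι) : 0 ≤ (M * N) i j :=
  Finset.sum_nonneg fun k _ => mul_nonneg (hM i k) (hN k j)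

lemma list_prod_apply_nonneg [DecidableEq ι] (l : List (Matrix ι ι R))
    (hl : ∀ M ∈ l, ∀ i j, 0 ≤ M i j) (i j : ι) : 0 ≤ l.prod i j := by
  refine List.prod_induction (fun M : Matrix ι ι R => ∀ i j, 0 ≤ M i j)
    (fun _ _ => mul_apply_nonneg) (fun i j => ?_) hl i j
  rw [one_apply]
  split_ifs <;> simp

lemma posEntries_subset_mul {M N : Matrix ι ι R} (hM : ∀ i j, 0 ≤ M i j)
    (hN : ∀ i j, 0 ≤ N i j) (hdiag : ∀ i, 0 < N i i) : M.posEntries ⊆ (M * N).posEntries :=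
  fun ⟨k, l⟩ hkl => Finset.sum_pos' (fun m _ => mul_nonneg (hM k m) (hN m l))
    ⟨l, Finset.mem_univ l, mul_pos hkl (hdiag l)⟩

end Matrix

open Matrix

section ForwardAccumulation

variable {n : ℕ} (A : ℕ → Matrix (Fin n) (Fin n) ℝ)

lemma fwdAcc_succ {s t : ℕ} (h : s ≤ t) : fwdAcc A s (t + 1) = fwdAcc A s t * A t := by
  unfold fwdAcc
  rw [Nat.succ_sub h, List.range'_concat, List.map_append, List.prod_append]
  simp [Nat.add_sub_cancel' h]

variable {A} (hnonneg : ∀ t i j, 0 ≤ A t i j)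
include hnonneg

lemma fwdAcc_nonneg (s t : ℕ) (i j : Fin n) : 0 ≤ fwdAcc A s t i j :=
  list_prod_apply_nonneg _ (by
    simp only [List.mem_map]
    rintro _ ⟨t, -, rfl⟩
    exact hnonneg t) i j

variable (hdiag : ∀ t i, 0 < A t i i)
include hdiag

lemma monotone_posEntries_fwdAcc (s : ℕ) :
    Monotone fun k => (fwdAcc A s (s + k)).posEntries :=
  monotone_nat_of_le_succ fun k => by
    rw [← add_assoc, fwdAcc_succ A (Nat.le_add_right s k)]
    exact posEntries_subset_mul (fwdAcc_nonneg hnonneg _ _) (hnonneg _) (hdiag _)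

lemma exists_posEntries_fwdAcc_eventually_eq (s : ℕ) : ∃ T, s ≤ T ∧
    ∀ t, T ≤ t → (fwdAcc A s t).posEntries = (fwdAcc A s T).posEntries := by
  obtain ⟨N, hN⟩ := WellFoundedGT.monotone_chain_condition
    ⟨_, monotone_posEntries_fwdAcc hnonneg hdiag s⟩
  refine ⟨s + N, Nat.le_add_right s N, fun t ht => ?_⟩
  obtain ⟨k, rfl⟩ := Nat.exists_eq_add_of_le ht
  simpa [add_assoc] using (hN (N + k) (Nat.le_add_right N k)).symm

end ForwardAccumulation

lemma Set.Infinite.exists_seq_mem_lt_apply_succ {S : Set ℕ} (hS : S.Infinite) (T : ℕ → ℕ) :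
    ∃ s : ℕ → ℕ, 0 < s 0 ∧ (∀ i, s i ∈ S) ∧ ∀ i, T (s i) < s (i + 1) := by
  choose next hnext_mem hnext_gt using hS.exists_gt
  let s : ℕ → ℕ := fun i => Nat.rec (next 0) (fun _ m => next (T m)) i
  exact ⟨s, hnext_gt 0, fun i => by cases i <;> exact hnext_mem _, fun i => hnext_gt _⟩

theorem stmt1_general {n : ℕ} (A : ℕ → Matrix (Fin n) (Fin n) ℝ)
    (hnonneg : ∀ t i j, 0 ≤ A t i j) (hdiag : ∀ t i, 0 < A t i i) :
    ∃ s : ℕ → ℕ, StrictMono s ∧ 0 < s 0 ∧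
      ∀ i : ℕ, ∀ k l : Fin n,
        0 < fwdAcc A (s i) (s (i + 1)) k l ↔ 0 < fwdAcc A (s 0) (s 1) k l := by
  choose T hle_T hT using exists_posEntries_fwdAcc_eventually_eq hnonneg hdiag
  obtain ⟨P, hP⟩ := Finite.exists_infinite_fiber fun s => (fwdAcc A s (T s)).posEntries
  obtain ⟨s, hs0, hsP, hsT⟩ :=
    (Set.infinite_coe_iff.mp hP).exists_seq_mem_lt_apply_succ T
  have htype : ∀ i, (fwdAcc A (s i) (s (i + 1))).posEntries = P :=
    fun i => (hT _ _ (hsT i).le).trans (hsP i)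
  refine ⟨s, strictMono_nat_of_lt_succ fun i => (hle_T _).trans_lt (hsT i), hs0,
    fun i k l => ?_⟩
  exact Set.ext_iff.mp ((htype i).trans (htype 0).symm) (k, l)

/-- For a sequence of nonnegative matrices with positive diagonals, there is a strictly
increasing sequence `0 < s 0 < s 1 < ⋯` such that all forward accumulations
`A(s i, s (i+1))` have the same type (zero pattern) as `A(s 0, s 1)`. -/
theorem stmt1 {n : ℕ} (hn : 1 ≤ n) (A : ℕ → Matrix (Fin n) (Fin n) ℝ)
    (hnonneg : ∀ t i j, 0 ≤ A t i j) (hdiag : ∀ t i, 0 < A t i i) :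
    ∃ s : ℕ → ℕ, StrictMono s ∧ 0 < s 0 ∧
      ∀ i : ℕ, ∀ k l : Fin n,
        0 < fwdAcc A (s i) (s (i + 1)) k l ↔ 0 < fwdAcc A (s 0) (s 1) k l :=
  stmt1_general A hnonneg hdiag
end

section
/- Let A and B be n×n row-stochastic matrices. Then the coefficient of ergodicity is submultiplicative: τ(A·B) ≤ τ(A)·τ(B). -/
/-!
For row-stochastic `A`, `τ(A)` is half the largest `ℓ¹` distance between two rows, because
`min a b = (a + b - |a - b|) / 2`. A row difference of `A * B` is `d ᵥ* B` with `d = A i - A j`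
a vector of total mass zero and `‖d‖₁ ≤ 2 τ(A)`. Pairing `d ᵥ* B` with its sign vector `s` gives
`‖d ᵥ* B‖₁ = d ⬝ᵥ (B *ᵥ s)`, and a mass-zero vector paired with a vector whose values spread over
an interval of length `c` gives at most `‖d‖₁ c / 2`; here `c = max_{a,b} ‖B a - B b‖₁ ≤ 2 τ(B)`.
-/

/-- Coefficient of ergodicity of a row-stochastic matrix:
`τ(A) = 1 - min_{i,j} ∑ₖ min (A i k) (A j k)`. -/
noncomputable def ergCoeff {n : ℕ} (A : Matrix (Fin n) (Fin n) ℝ) : ℝ :=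
  1 - sInf {x : ℝ | ∃ i j : Fin n, x = ∑ k, min (A i k) (A j k)}

open Finset Matrix

lemma min_eq_half_add_sub_abs_sub (a b : ℝ) : min a b = (a + b - |a - b|) / 2 := by
  rcases le_total a b with h | h
  · rw [min_eq_left h, abs_of_nonpos (sub_nonpos.2 h)]; ring
  · rw [min_eq_right h, abs_of_nonneg (sub_nonneg.2 h)]; ring

lemma sum_min_eq_one_sub_half_sum_abs_sub {ι : Type*} [Fintype ι] {f g : ι → ℝ}
    (hf : ∑ k, f k = 1) (hg : ∑ k, g k = 1) :
    ∑ k, min (f k) (g k) = 1 - (∑ k, |f k - g k|) / 2 := by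
  simp_rw [min_eq_half_add_sub_abs_sub]
  rw [← sum_div, sum_sub_distrib, sum_add_distrib, hf, hg]
  ring

lemma sum_mul_le_of_sum_eq_zero {ι : Type*} [Fintype ι] {d y : ι → ℝ} {c : ℝ}
    (hd : ∑ l, d l = 0) (hy : ∀ a b, y a - y b ≤ c) :
    ∑ l, d l * y l ≤ (∑ l, |d l|) / 2 * c := by
  cases isEmpty_or_nonempty ι
  · simp
  obtain ⟨m, -, hm⟩ := exists_min_image univ y univ_nonempty
  -- As `d` has mass zero, `y` may be recentred at the midpoint `y₀` of an interval of length `c`.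
  set y₀ := y m + c / 2 with hy₀
  have hdev (l : ι) : |y l - y₀| ≤ c / 2 :=
    abs_le.2 ⟨by linarith [hm l (mem_univ l)], by linarith [hy l m]⟩
  calc ∑ l, d l * y l = ∑ l, d l * (y l - y₀) := by
        simp only [mul_sub, sum_sub_distrib, ← sum_mul, hd, zero_mul, sub_zero]
    _ ≤ ∑ l, |d l| * (c / 2) := sum_le_sum fun l _ =>
        (le_abs_self _).trans (abs_mul (d l) _ ▸ mul_le_mul_of_nonneg_left (hdev l) (abs_nonneg _))
    _ = (∑ l, |d l|) / 2 * c := by rw [← sum_mul]; ring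

lemma sum_abs_vecMul_le {ι κ : Type*} [Fintype ι] [Fintype κ] {d : ι → ℝ} {B : Matrix ι κ ℝ}
    {c : ℝ} (hd : ∑ l, d l = 0) (hB : ∀ a b, ∑ k, |B a k - B b k| ≤ c) :
    ∑ k, |(d ᵥ* B) k| ≤ (∑ l, |d l|) / 2 * c := by
  set s : κ → ℝ := fun k => SignType.sign ((d ᵥ* B) k)
  have hs (k : κ) : |s k| ≤ 1 := by
    cases h : SignType.sign ((d ᵥ* B) k) <;> simp [s, h]
  have hBs (a b : ι) : (B *ᵥ s) a - (B *ᵥ s) b ≤ c := calc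
    (B *ᵥ s) a - (B *ᵥ s) b = ∑ k, (B a k - B b k) * s k := by
      simp only [mulVec, dotProduct, sub_mul, sum_sub_distrib]
    _ ≤ ∑ k, |B a k - B b k| := sum_le_sum fun k _ =>
      (le_abs_self _).trans (abs_mul (B a k - B b k) _ ▸ mul_le_of_le_one_right (abs_nonneg _) (hs k))
    _ ≤ c := hB a b
  calc ∑ k, |(d ᵥ* B) k| = d ⬝ᵥ (B *ᵥ s) := by
        rw [dotProduct_mulVec]
        simp only [dotProduct, s, self_mul_sign]
    _ ≤ (∑ l, |d l|) / 2 * c := sum_mul_le_of_sum_eq_zero hd hBs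

lemma sum_abs_sub_le_two_mul_ergCoeff {n : ℕ} {M : Matrix (Fin n) (Fin n) ℝ}
    (hM : M ∈ rowStochastic ℝ (Fin n)) (i j : Fin n) :
    ∑ k, |M i k - M j k| ≤ 2 * ergCoeff M := by
  have hbdd : BddBelow {x : ℝ | ∃ i j : Fin n, x = ∑ k, min (M i k) (M j k)} :=
    ⟨0, by
      rintro x ⟨i, j, rfl⟩
      exact sum_nonneg fun k _ =>
        le_min (nonneg_of_mem_rowStochastic hM) (nonneg_of_mem_rowStochastic hM)⟩
  have h := csInf_le hbdd ⟨i, j, rfl⟩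
  rw [sum_min_eq_one_sub_half_sum_abs_sub (sum_row_of_mem_rowStochastic hM i)
    (sum_row_of_mem_rowStochastic hM j)] at h
  rw [ergCoeff]
  linarith

lemma ergCoeff_le_of_forall_sum_abs_sub_le {n : ℕ} [NeZero n] {M : Matrix (Fin n) (Fin n) ℝ}
    (hM : ∀ i, ∑ k, M i k = 1) {t : ℝ} (ht : ∀ i j, ∑ k, |M i k - M j k| ≤ 2 * t) :
    ergCoeff M ≤ t := by
  rw [ergCoeff, sub_le_comm]
  refine le_csInf ⟨_, 0, 0, rfl⟩ ?_
  rintro x ⟨i, j, rfl⟩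
  rw [sum_min_eq_one_sub_half_sum_abs_sub (hM i) (hM j)]
  linarith [ht i j]

/-- The coefficient of ergodicity is submultiplicative on row-stochastic matrices:
`τ(A·B) ≤ τ(A)·τ(B)`. -/
theorem stmt9 {n : ℕ} (hn : 1 ≤ n) (A B : Matrix (Fin n) (Fin n) ℝ)
    (hAnonneg : ∀ i j, 0 ≤ A i j) (hArowsum : ∀ i, ∑ j, A i j = 1)
    (hBnonneg : ∀ i j, 0 ≤ B i j) (hBrowsum : ∀ i, ∑ j, B i j = 1) :
    ergCoeff (A * B) ≤ ergCoeff A * ergCoeff B := by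
  have := NeZero.of_pos (Nat.succ_le_iff.1 hn)
  have hA : A ∈ rowStochastic ℝ (Fin n) := mem_rowStochastic_iff_sum.2 ⟨hAnonneg, hArowsum⟩
  have hB : B ∈ rowStochastic ℝ (Fin n) := mem_rowStochastic_iff_sum.2 ⟨hBnonneg, hBrowsum⟩
  have hτB : 0 ≤ ergCoeff B := by simpa using sum_abs_sub_le_two_mul_ergCoeff hB 0 0
  refine ergCoeff_le_of_forall_sum_abs_sub_le
    (sum_row_of_mem_rowStochastic (mul_mem hA hB)) fun i j => ?_
  have hd : ∑ l, (A i - A j) l = 0 := by simp [sum_sub_distrib, hArowsum]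
  calc ∑ k, |(A * B) i k - (A * B) j k| = ∑ k, |((A i - A j) ᵥ* B) k| := by
        simp only [mul_apply_eq_vecMul, sub_vecMul, Pi.sub_apply]
    _ ≤ (∑ l, |A i l - A j l|) / 2 * (2 * ergCoeff B) :=
        sum_abs_vecMul_le hd (sum_abs_sub_le_two_mul_ergCoeff hB)
    _ ≤ ergCoeff A * (2 * ergCoeff B) := by
        gcongr
        linarith [sum_abs_sub_le_two_mul_ergCoeff hA i j]
    _ = 2 * (ergCoeff A * ergCoeff B) := by ring
end

section
/- Let (A_i)_{i∈ℕ} be a sequence of n×n row-stochastic matrices and (δ_i)_{i∈ℕ} real numbers with δ_i > 0, such that every entry of A_i is at least δ_i (i.e., all A_i are entrywise positive with min entry ≥ δ_i) and ∑_{i=0}^∞ δ_i = ∞. Then the backward products A_i ⋯ A_1 A_0 converge as i → ∞ to a consensus matrix, i.e., a row-stochastic matrix all of whose rows are equal. -/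
open Filter Topology Finset Matrix

/-!
Fix a column `j` and follow the vectors `x t = (k ↦ Q t k j)`, where `Q t = A (t-1) ⋯ A 0`, so
that `x (t+1) = A t *ᵥ x t`. Each entry of `A t *ᵥ x` is a convex combination of the entries of
`x`, so the minimum of `x t` increases and the maximum decreases. Since every weight is at least
`δ t`, the new maximum lies below the old one by at least `δ t` times the old spread, so the
spread shrinks by the factor `1 - δ t ≤ exp (-δ t)` and tends to zero because `∑ δ t = ∞`.
Hence all entries of the column converge to a common limit, and the limit of the row-stochastic
matrices `Q t` is row-stochastic because the set of those matrices is closed.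
-/

theorem Matrix.isClosed_rowStochastic {R n : Type*} [Fintype n] [DecidableEq n] [Semiring R]
    [PartialOrder R] [IsOrderedRing R] [TopologicalSpace R] [IsTopologicalSemiring R]
    [ClosedIciTopology R] [T2Space R] :
    IsClosed (rowStochastic R n : Set (Matrix n n R)) := by
  have hnonneg : IsClosed {M : Matrix n n R | ∀ i j, 0 ≤ M i j} := by
    simp only [Set.ofPred_forall]
    exact isClosed_iInter fun i => isClosed_iInter fun j =>
      isClosed_Ici.preimage (continuous_id.matrix_elem i j)
  exact hnonneg.inter (isClosed_eq (continuous_id.matrix_mulVec continuous_const) continuous_const)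

theorem tendsto_zero_of_le_exp_neg_mul {s ε : ℕ → ℝ} (hs : ∀ t, 0 ≤ s t)
    (hstep : ∀ t, s (t + 1) ≤ Real.exp (-ε t) * s t)
    (hdiv : Tendsto (fun i => ∑ t ∈ range i, ε t) atTop atTop) :
    Tendsto s atTop (𝓝 0) := by
  have hbound : ∀ i, s i ≤ Real.exp (-∑ t ∈ range i, ε t) * s 0 := by
    intro i
    induction i with
    | zero => simp
    | succ i ih =>
      calc s (i + 1) ≤ Real.exp (-ε i) * s i := hstep i
        _ ≤ Real.exp (-ε i) * (Real.exp (-∑ t ∈ range i, ε t) * s 0) := by gcongr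
        _ = Real.exp (-∑ t ∈ range (i + 1), ε t) * s 0 := by
          rw [sum_range_succ, neg_add, Real.exp_add]; ring
  have hexp : Tendsto (fun i => Real.exp (-∑ t ∈ range i, ε t) * s 0) atTop (𝓝 0) := by
    simpa using (Real.tendsto_exp_atBot.comp (tendsto_neg_atTop_atBot.comp hdiv)).mul_const (s 0)
  exact squeeze_zero hs hbound hexp

section Fintype

variable {ι : Type*} [Fintype ι]

theorem le_sum_mul_of_le {w x : ι → ℝ} {a : ℝ} (hw₀ : ∀ l, 0 ≤ w l) (hw₁ : ∑ l, w l = 1)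
    (ha : ∀ l, a ≤ x l) : a ≤ ∑ l, w l * x l :=
  calc a = ∑ l, w l * a := by rw [← sum_mul, hw₁, one_mul]
    _ ≤ ∑ l, w l * x l := sum_le_sum fun l _ => mul_le_mul_of_nonneg_left (ha l) (hw₀ l)

theorem sum_mul_le_sub_of_le {w x : ι → ℝ} {b : ℝ} (hw₀ : ∀ l, 0 ≤ w l) (hw₁ : ∑ l, w l = 1)
    (hb : ∀ l, x l ≤ b) (l₀ : ι) : ∑ l, w l * x l ≤ b - w l₀ * (b - x l₀) := by
  have : w l₀ * (b - x l₀) ≤ ∑ l, w l * (b - x l) :=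
    single_le_sum (f := fun l => w l * (b - x l))
      (fun l _ => mul_nonneg (hw₀ l) (sub_nonneg.2 (hb l))) (mem_univ l₀)
  simp only [mul_sub, sum_sub_distrib, ← sum_mul, hw₁, one_mul] at this
  linarith

variable [DecidableEq ι] [Nonempty ι] {B : Matrix ι ι ℝ}

namespace Matrix

theorem inf'_le_mulVec_of_mem_rowStochastic (hB : B ∈ rowStochastic ℝ ι) (x : ι → ℝ) (k : ι) :
    univ.inf' univ_nonempty x ≤ (B *ᵥ x) k :=
  le_sum_mul_of_le (fun _ => nonneg_of_mem_rowStochastic hB) (sum_row_of_mem_rowStochastic hB k)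
    fun l => inf'_le x (mem_univ l)

theorem mulVec_le_sup'_sub_of_mem_rowStochastic {ε : ℝ} (hB : B ∈ rowStochastic ℝ ι)
    (hε : ∀ k l, ε ≤ B k l) (x : ι → ℝ) (k : ι) :
    (B *ᵥ x) k ≤ univ.sup' univ_nonempty x
      - ε * (univ.sup' univ_nonempty x - univ.inf' univ_nonempty x) := by
  obtain ⟨l₀, -, hl₀⟩ := exists_mem_eq_inf' univ_nonempty x
  have hB₀ : ∀ l, 0 ≤ B k l := fun _ => nonneg_of_mem_rowStochastic hB
  calc (B *ᵥ x) k ≤ _ - B k l₀ * (_ - x l₀) :=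
        sum_mul_le_sub_of_le hB₀ (sum_row_of_mem_rowStochastic hB k) (fun l => le_sup' x (mem_univ l)) l₀
    _ ≤ _ := by
      rw [hl₀]
      gcongr
      · exact sub_nonneg.2 (le_sup' x (mem_univ l₀))
      · exact hε k l₀

theorem mulVec_le_sup'_of_mem_rowStochastic (hB : B ∈ rowStochastic ℝ ι) (x : ι → ℝ) (k : ι) :
    (B *ᵥ x) k ≤ univ.sup' univ_nonempty x := by
  simpa using mulVec_le_sup'_sub_of_mem_rowStochastic hB
    (fun _ _ => nonneg_of_mem_rowStochastic hB) x k

theorem exists_tendsto_const_of_mulVec_rowStochastic {B : ℕ → Matrix ι ι ℝ} {ε : ℕ → ℝ}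
    (hB : ∀ t, B t ∈ rowStochastic ℝ ι) (hε : ∀ t k l, ε t ≤ B t k l)
    (hdiv : Tendsto (fun i => ∑ t ∈ range i, ε t) atTop atTop) {x : ℕ → ι → ℝ}
    (hx : ∀ t, x (t + 1) = B t *ᵥ x t) :
    ∃ c : ℝ, Tendsto x atTop (𝓝 fun _ => c) := by
  set m : ℕ → ℝ := fun t => univ.inf' univ_nonempty (x t)
  set M : ℕ → ℝ := fun t => univ.sup' univ_nonempty (x t)
  have hm_le : ∀ t k, m t ≤ x t k := fun t k => inf'_le _ (mem_univ k)
  have hle_M : ∀ t k, x t k ≤ M t := fun t k => le_sup' (x t) (mem_univ k)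
  have hm_mono : Monotone m := monotone_nat_of_le_succ fun t =>
    le_inf' _ _ fun k _ => hx t ▸ inf'_le_mulVec_of_mem_rowStochastic (hB t) (x t) k
  have hM_anti : Antitone M := antitone_nat_of_succ_le fun t =>
    sup'_le _ _ fun k _ => hx t ▸ mulVec_le_sup'_of_mem_rowStochastic (hB t) (x t) k
  have hspread_nonneg : ∀ t, 0 ≤ M t - m t := fun t =>
    sub_nonneg.2 ((hm_le t (Classical.arbitrary ι)).trans (hle_M t _))
  have hspread_step : ∀ t, M (t + 1) - m (t + 1) ≤ Real.exp (-ε t) * (M t - m t) := by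
    intro t
    have hM : M (t + 1) ≤ M t - ε t * (M t - m t) := sup'_le _ _ fun k _ =>
      hx t ▸ mulVec_le_sup'_sub_of_mem_rowStochastic (hB t) (hε t) (x t) k
    have hm : m t ≤ m (t + 1) := hm_mono t.le_succ
    nlinarith [Real.add_one_le_exp (-ε t), hspread_nonneg t]
  have hspread : Tendsto (fun t => M t - m t) atTop (𝓝 0) :=
    tendsto_zero_of_le_exp_neg_mul hspread_nonneg hspread_step hdiv
  have hm_bdd : BddAbove (Set.range m) := ⟨M 0, by
    rintro _ ⟨t, rfl⟩
    exact (hm_le t (Classical.arbitrary ι)).trans ((hle_M t _).trans (hM_anti t.zero_le))⟩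
  have hm_lim := tendsto_atTop_ciSup hm_mono hm_bdd
  have hM_lim : Tendsto M atTop (𝓝 (⨆ t, m t)) := by simpa using hm_lim.add hspread
  exact ⟨_, tendsto_pi_nhds.2 fun k =>
    tendsto_of_tendsto_of_tendsto_of_le_of_le hm_lim hM_lim (hm_le · k) (hle_M · k)⟩

theorem exists_tendsto_of_mul_rowStochastic {B : ℕ → Matrix ι ι ℝ} {ε : ℕ → ℝ}
    (hB : ∀ t, B t ∈ rowStochastic ℝ ι) (hε : ∀ t k l, ε t ≤ B t k l)
    (hdiv : Tendsto (fun i => ∑ t ∈ range i, ε t) atTop atTop) {Q : ℕ → Matrix ι ι ℝ}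
    (hQ : ∀ t, Q (t + 1) = B t * Q t) :
    ∃ c : ι → ℝ, Tendsto Q atTop (𝓝 (of fun _ => c)) := by
  have hcol : ∀ j, ∃ c : ℝ, Tendsto (fun t k => Q t k j) atTop (𝓝 fun _ => c) := fun j =>
    exists_tendsto_const_of_mulVec_rowStochastic hB hε hdiv fun t => by
      ext k
      simp [hQ, mul_apply, mulVec, dotProduct]
  choose c hc using hcol
  exact ⟨c, tendsto_pi_nhds.2 fun k => tendsto_pi_nhds.2 fun j => tendsto_pi_nhds.1 (hc j) k⟩

end Matrix
end Fintype

/-- If every entry of the row-stochastic matrix `A i` is at least `δ i > 0` and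
`∑ δ i = ∞`, then the backward products `A i ⋯ A 1 A 0` converge to a consensus matrix
(a row-stochastic matrix all of whose rows are equal). -/
theorem stmt13 {n : ℕ} (hn : 1 ≤ n) (A : ℕ → Matrix (Fin n) (Fin n) ℝ)
    (hrowsum : ∀ t i, ∑ j, A t i j = 1)
    (δ : ℕ → ℝ) (hδpos : ∀ i, 0 < δ i)
    (hentry : ∀ t i j, δ t ≤ A t i j)
    (hdiv : Tendsto (fun m => ∑ i ∈ Finset.range m, δ i) atTop atTop) :
    ∃ K : Matrix (Fin n) (Fin n) ℝ,
      (∀ i j, 0 ≤ K i j) ∧ (∀ i, ∑ j, K i j = 1) ∧ (∀ i j : Fin n, K i = K j) ∧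
      Tendsto (fun i => ((List.range (i + 1)).map A).reverse.prod) atTop (𝓝 K) := by
  have : Nonempty (Fin n) := Fin.pos_iff_nonempty.mp hn
  have hA : ∀ t, A t ∈ rowStochastic ℝ (Fin n) := fun t =>
    mem_rowStochastic_iff_sum.2 ⟨fun i j => (hδpos t).le.trans (hentry t i j), hrowsum t⟩
  set Q : ℕ → Matrix (Fin n) (Fin n) ℝ := fun t => ((List.range t).map A).reverse.prod
  have hQ : ∀ t, Q t ∈ rowStochastic ℝ (Fin n) := fun t =>
    Submonoid.list_prod_mem _ (by simpa using fun i _ => hA i)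
  obtain ⟨c, hc⟩ := exists_tendsto_of_mul_rowStochastic hA hentry hdiv (Q := Q) fun t => by
    simp [Q, List.range_succ]
  obtain ⟨hK₀, hK₁⟩ := mem_rowStochastic_iff_sum.1 <|
    isClosed_rowStochastic.mem_of_tendsto hc (Eventually.of_forall hQ)
  exact ⟨_, hK₀, hK₁, fun _ _ => rfl, hc.comp (tendsto_add_atTop_nat 1)⟩
end

section
/- Let (A(t))_{t∈ℕ} be a sequence of n×n row-stochastic matrices with min⁺ A(t) ≥ δ for all t, where 0 < δ < 1, let a > 0 be real, and let 0 < t_0 < t_1 < ⋯ be a strictly increasing sequence of natural numbers whose gaps grow at most doubly-logarithmically: t_{i+1} − t_i ≤ a·log(log(i)) for all i ≥ 3. Then ∑_{i=3}^∞ min⁺ A(t_{i+1}, t_i) = ∞; that is, the divergence hypothesis of the convergence theorem is satisfied with δ_i := δ^{t_{i+1}-t_i}. -/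
/-!
A nonzero entry of a product of nonnegative matrices dominates a product of nonzero entries of
the factors, so every positive entry of `A(t_{i+1}, t_i)` is at least
`δ ^ (t_{i+1} - t_i) ≥ δ ^ (a log log i) = (log i) ^ (a log δ)`. Since `log log i = o(log i)`, this
eventually dominates `1 / i`, and the harmonic series diverges.
-/

open Filter

/-- The positive minimum `min⁺ A`: the smallest strictly positive entry of `A`. -/
noncomputable def minPos {n : ℕ} (A : Matrix (Fin n) (Fin n) ℝ) : ℝ :=
  sInf {x : ℝ | 0 < x ∧ ∃ i j : Fin n, A i j = x}

open Matrix Real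

theorem Matrix.le_mul_apply_of_ne_zero {R l m o : Type*} [Fintype m] [Semiring R]
    [PartialOrder R] [IsOrderedRing R] {B : Matrix l m R} {C : Matrix m o R} {β γ : R}
    (hB0 : ∀ i j, 0 ≤ B i j) (hC0 : ∀ i j, 0 ≤ C i j)
    (hB : ∀ i j, B i j ≠ 0 → β ≤ B i j) (hC : ∀ i j, C i j ≠ 0 → γ ≤ C i j) (hγ : 0 ≤ γ)
    {i : l} {k : o} (h : (B * C) i k ≠ 0) : β * γ ≤ (B * C) i k := by
  rw [mul_apply] at h ⊢
  obtain ⟨j, -, hj⟩ := Finset.exists_ne_zero_of_sum_ne_zero h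
  calc β * γ ≤ B i j * C j k :=
        mul_le_mul (hB i j (left_ne_zero_of_mul hj)) (hC j k (right_ne_zero_of_mul hj)) hγ
          (hB0 i j)
    _ ≤ ∑ j, B i j * C j k :=
        Finset.single_le_sum (fun j _ => mul_nonneg (hB0 i j) (hC0 j k)) (Finset.mem_univ j)

theorem Matrix.exists_pos_of_mem_rowStochastic {R n : Type*} [Fintype n] [DecidableEq n]
    [Nonempty n] [Semiring R] [PartialOrder R] [IsOrderedRing R] [Nontrivial R]
    {M : Matrix n n R} (hM : M ∈ rowStochastic R n) : ∃ i j, 0 < M i j := by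
  obtain ⟨i⟩ := ‹Nonempty n›
  obtain ⟨j, -, hj⟩ := Finset.exists_ne_zero_of_sum_ne_zero
    (by rw [sum_row_of_mem_rowStochastic hM i]; exact one_ne_zero)
  exact ⟨i, j, (nonneg_of_mem_rowStochastic hM).lt_of_ne' hj⟩

section MinPos

variable {n : ℕ} {M : Matrix (Fin n) (Fin n) ℝ}

theorem minPos_nonneg (M : Matrix (Fin n) (Fin n) ℝ) : 0 ≤ minPos M :=
  Real.sInf_nonneg fun _ hx => hx.1.le

theorem minPos_le_apply {i j : Fin n} (h : 0 < M i j) : minPos M ≤ M i j :=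
  csInf_le ⟨0, fun _ hx => hx.1.le⟩ ⟨h, i, j, rfl⟩

theorem le_minPos {β : ℝ} (hM : ∃ i j, 0 < M i j) (h : ∀ i j, 0 < M i j → β ≤ M i j) :
    β ≤ minPos M := by
  obtain ⟨i, j, hij⟩ := hM
  exact le_csInf ⟨_, hij, i, j, rfl⟩ fun _ ⟨hx, i, j, hx'⟩ => hx' ▸ h i j (hx' ▸ hx)

end MinPos

section BackAcc

variable {n : ℕ} (A : ℕ → Matrix (Fin n) (Fin n) ℝ)

theorem backAcc_self (s : ℕ) : backAcc A s s = 1 := by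
  simp [backAcc]

theorem backAcc_add_succ (s k : ℕ) :
    backAcc A s (s + (k + 1)) = A (s + k) * backAcc A s (s + k) := by
  rw [backAcc, backAcc, Nat.add_sub_cancel_left, Nat.add_sub_cancel_left, List.range'_concat]
  simp

variable {A}

theorem backAcc_mem_rowStochastic (hA : ∀ t, A t ∈ rowStochastic ℝ (Fin n)) (s t : ℕ) :
    backAcc A s t ∈ rowStochastic ℝ (Fin n) :=
  Submonoid.list_prod_mem _ fun _ hM => by
    obtain ⟨t, -, rfl⟩ := List.mem_map.1 (List.mem_reverse.1 hM)
    exact hA t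

theorem pow_le_backAcc_apply (hA : ∀ t, A t ∈ rowStochastic ℝ (Fin n)) {δ : ℝ} (hδ : 0 ≤ δ)
    (hent : ∀ t i j, A t i j ≠ 0 → δ ≤ A t i j) (s k : ℕ) :
    ∀ i j, backAcc A s (s + k) i j ≠ 0 → δ ^ k ≤ backAcc A s (s + k) i j := by
  induction k with
  | zero =>
    intro i j h
    rw [add_zero, backAcc_self, one_apply] at h ⊢
    split_ifs at h ⊢ <;> simp_all
  | succ k ih =>
    intro i j h
    rw [backAcc_add_succ] at h ⊢
    rw [pow_succ']
    exact le_mul_apply_of_ne_zero (fun _ _ => nonneg_of_mem_rowStochastic (hA _))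
      (fun _ _ => nonneg_of_mem_rowStochastic (backAcc_mem_rowStochastic hA _ _))
      (hent _) ih (pow_nonneg hδ k) h

theorem pow_le_minPos_backAcc [NeZero n] (hA : ∀ t, A t ∈ rowStochastic ℝ (Fin n)) {δ : ℝ}
    (hδ : 0 ≤ δ) (hmin : ∀ t, δ ≤ minPos (A t)) {s t : ℕ} (hst : s ≤ t) :
    δ ^ (t - s) ≤ minPos (backAcc A s t) := by
  have hent : ∀ t i j, A t i j ≠ 0 → δ ≤ A t i j := fun t _ _ h =>
    (hmin t).trans (minPos_le_apply ((nonneg_of_mem_rowStochastic (hA t)).lt_of_ne' h))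
  obtain ⟨k, rfl⟩ := Nat.exists_eq_add_of_le hst
  rw [Nat.add_sub_cancel_left]
  exact le_minPos (exists_pos_of_mem_rowStochastic (backAcc_mem_rowStochastic hA _ _))
    fun i j h => pow_le_backAcc_apply hA hδ hent s k i j h.ne'

end BackAcc

theorem eventually_mul_log_le_self (c : ℝ) : ∀ᶠ y : ℝ in atTop, c * log y ≤ y := by
  filter_upwards [(isLittleO_log_id_atTop.const_mul_left c).bound one_pos,
    eventually_ge_atTop 0] with y hy hy0
  rw [one_mul, id, norm_of_nonneg hy0] at hy
  exact (le_abs_self _).trans hy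

theorem eventually_inv_le_rpow_mul_log_log {δ : ℝ} (hδ : 0 < δ) (a : ℝ) :
    ∀ᶠ x : ℝ in atTop, x⁻¹ ≤ δ ^ (a * log (log x)) := by
  filter_upwards [tendsto_log_atTop.eventually (eventually_mul_log_le_self (-(a * log δ))),
    eventually_gt_atTop 0] with x hx hx0
  rw [rpow_def_of_pos hδ, ← exp_log (inv_pos.2 hx0), log_inv]
  exact exp_le_exp.2 (by linarith)

theorem not_summable_of_eventually_inv_le {f : ℕ → ℝ}
    (h : ∀ᶠ i : ℕ in atTop, (i : ℝ)⁻¹ ≤ f i) : ¬Summable f := fun hf =>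
  not_summable_natCast_inv <| hf.of_norm_bounded_eventually_nat <| by
    filter_upwards [h] with i hi
    rwa [norm_inv, RCLike.norm_natCast]

theorem tendsto_sum_Ico_atTop_of_not_summable {f : ℕ → ℝ} (hf0 : 0 ≤ f) (hf : ¬Summable f)
    (k : ℕ) : Tendsto (fun m => ∑ i ∈ Finset.Ico k m, f i) atTop atTop := by
  have h := tendsto_atTop_add_const_right atTop (-∑ i ∈ Finset.range k, f i)
    ((not_summable_iff_tendsto_nat_atTop_of_nonneg hf0).1 hf)
  refine h.congr' ?_
  filter_upwards [eventually_ge_atTop k] with m hm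
  rw [Finset.sum_Ico_eq_sub _ hm, sub_eq_add_neg]

theorem stmt18_general {n : ℕ} (hn : 1 ≤ n) (A : ℕ → Matrix (Fin n) (Fin n) ℝ)
    (hnonneg : ∀ t i j, 0 ≤ A t i j) (hrowsum : ∀ t i, ∑ j, A t i j = 1)
    (δ : ℝ) (hδ0 : 0 < δ) (hδ1 : δ < 1) (hmin : ∀ t, δ ≤ minPos (A t))
    (a : ℝ)
    (t : ℕ → ℕ) (ht : StrictMono t)
    (hgap : ∀ i : ℕ, 3 ≤ i → (t (i + 1) - t i : ℝ) ≤ a * Real.log (Real.log i)) :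
    Tendsto (fun m => ∑ i ∈ Finset.Ico 3 m, minPos (backAcc A (t i) (t (i + 1))))
      atTop atTop := by
  have : NeZero n := ⟨by omega⟩
  have hA : ∀ t, A t ∈ rowStochastic ℝ (Fin n) := fun t =>
    mem_rowStochastic_iff_sum.2 ⟨hnonneg t, hrowsum t⟩
  have hlow : ∀ i : ℕ, 3 ≤ i →
      δ ^ (a * log (log i)) ≤ minPos (backAcc A (t i) (t (i + 1))) := by
    intro i hi
    have hti : t i ≤ t (i + 1) := ht.monotone i.le_succ
    calc δ ^ (a * log (log i)) ≤ δ ^ ((t (i + 1) - t i : ℕ) : ℝ) :=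
          rpow_le_rpow_of_exponent_ge hδ0 hδ1.le (by rw [Nat.cast_sub hti]; exact hgap i hi)
      _ = δ ^ (t (i + 1) - t i) := rpow_natCast _ _
      _ ≤ minPos (backAcc A (t i) (t (i + 1))) := pow_le_minPos_backAcc hA hδ0.le hmin hti
  refine tendsto_sum_Ico_atTop_of_not_summable (fun i => minPos_nonneg _)
    (not_summable_of_eventually_inv_le ?_) 3
  filter_upwards [tendsto_natCast_atTop_atTop.eventually
    (eventually_inv_le_rpow_mul_log_log hδ0 a), eventually_ge_atTop 3] with i hinv hi
  exact hinv.trans (hlow i hi)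

/-- Doubly-logarithmically growing intercommunication intervals: if `min⁺ A(t) ≥ δ` for
all `t` and the gaps satisfy `t (i+1) - t i ≤ a·log(log i)` for all `i ≥ 3`, then the
series `∑_{i=3}^∞ min⁺ A(t (i+1), t i)` diverges to infinity. -/
theorem stmt18 {n : ℕ} (hn : 1 ≤ n) (A : ℕ → Matrix (Fin n) (Fin n) ℝ)
    (hnonneg : ∀ t i j, 0 ≤ A t i j) (hrowsum : ∀ t i, ∑ j, A t i j = 1)
    (δ : ℝ) (hδ0 : 0 < δ) (hδ1 : δ < 1) (hmin : ∀ t, δ ≤ minPos (A t))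
    (a : ℝ) (ha : 0 < a)
    (t : ℕ → ℕ) (ht : StrictMono t) (ht0 : 0 < t 0)
    (hgap : ∀ i : ℕ, 3 ≤ i → (t (i + 1) - t i : ℝ) ≤ a * Real.log (Real.log i)) :
    Tendsto (fun m => ∑ i ∈ Finset.Ico 3 m, minPos (backAcc A (t i) (t (i + 1))))
      atTop atTop :=
  stmt18_general hn A hnonneg hrowsum δ hδ0 hδ1 hmin a t ht hgap
end
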